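/- arXiv:2010.05360 — 2 statements merged into one kernel-verified Lean document; each statement's English description precedes it below -/
import Mathlib

section
/- (Localization) Let g = S[g₀, g₁] where g₀, g₁ : ℤ × Fin 2^(m-1) → ℝ are supported in the trapezoid {(h,s) : −s ≤ h ≤ 2^n − 1}, and S[g₀,g₁](h,2t) = g₀(h,t) + g₁(h+t,t), S[g₀,g₁](h,2t+1) = g₀(h,t) + g₁(h+t+1,t). Then g = Σ_{q,p} g₀(p,q)·φ_{p,q} + Σ_{q,p} g₁(p+q,q)·ψ_{p,q} lies in the span of {φ_{p,q} : −q ≤ p ≤ 2^n−1} ∪ {ψ_{p,q} : −2q ≤ p ≤ 2^n−q−1}. Moreover, if g lies in the span of the φ's alone then g₁ = 0, and if g lies in the span of the ψ's alone then g₀ = 0. -/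
/-- An image on the half-strip: support bounded below in the first coordinate. -/
def BddBelowSupp {k : ℕ} (f : ℤ × Fin k → ℝ) : Prop :=
  ∃ b : ℤ, ∀ i ≤ b, ∀ j, f (i, j) = 0

/-- Halving of a slope index: local slope of the sub-section. -/
def halfIdx {m : ℕ} (s : Fin (2 ^ (m + 1))) : Fin (2 ^ m) :=
  ⟨s.val / 2, by have h1 := s.isLt; have h2 : 2 ^ (m + 1) = 2 ^ m * 2 := pow_succ 2 m; omega⟩

/-- Doubling of a slope index (even slope). -/
def dbl0 {m : ℕ} (s : Fin (2 ^ m)) : Fin (2 ^ (m + 1)) :=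
  ⟨2 * s.val, by have h1 := s.isLt; have h2 : 2 ^ (m + 1) = 2 ^ m * 2 := pow_succ 2 m; omega⟩

/-- Doubling of a slope index, plus one (odd slope). -/
def dbl1 {m : ℕ} (s : Fin (2 ^ m)) : Fin (2 ^ (m + 1)) :=
  ⟨2 * s.val + 1, by have h1 := s.isLt; have h2 : 2 ^ (m + 1) = 2 ^ m * 2 := pow_succ 2 m; omega⟩

/-- The single-level ADRT merge operator `S`:
`S[f₀,f₁](h,2t) = f₀(h,t) + f₁(h+t,t)` and `S[f₀,f₁](h,2t+1) = f₀(h,t) + f₁(h+t+1,t)`. -/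
def Smerge (m : ℕ) (f₀ f₁ : ℤ × Fin (2 ^ m) → ℝ) : ℤ × Fin (2 ^ (m + 1)) → ℝ :=
  fun p =>
    f₀ (p.1, halfIdx p.2) +
      f₁ (p.1 + ((halfIdx p.2).val : ℤ) + ((p.2.val % 2 : ℕ) : ℤ), halfIdx p.2)

/-- The Kronecker delta image concentrated at `(h, s)`. -/
def deltaImg {k : ℕ} (h : ℤ) (s : Fin k) : ℤ × Fin k → ℝ :=
  fun p => if p = (h, s) then 1 else 0

/-- `φ_{p,q} = δ_{p,2q} + δ_{p,2q+1}`. -/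
def phiImg {m : ℕ} (p : ℤ) (q : Fin (2 ^ m)) : ℤ × Fin (2 ^ (m + 1)) → ℝ :=
  fun x => deltaImg p (dbl0 q) x + deltaImg p (dbl1 q) x

/-- `ψ_{p,q} = δ_{p,2q} + δ_{p−1,2q+1}`. -/
def psiImg {m : ℕ} (p : ℤ) (q : Fin (2 ^ m)) : ℤ × Fin (2 ^ (m + 1)) → ℝ :=
  fun x => deltaImg p (dbl0 q) x + deltaImg (p - 1) (dbl1 q) x

/-! Evaluating `S[g₀,g₁]` at `(h, s)` sees `g₀` only at `(h, ⌊s/2⌋)` and `g₁` only at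
`(h + ⌊s/2⌋ + s mod 2, ⌊s/2⌋)`, and these are exactly the coefficients that the expansion attaches
to the unique `φ` and `ψ` not vanishing at `(h, s)`; the trapezoid bounds make the expansion a
finite sum over the stated families.

Conversely, the functional `x ↦ x(h, 2t) − x(h, 2t+1)` kills every `φ_{p,q}` but sends `S[g₀,g₁]`
to `g₁(h+t, t) − g₁(h+t+1, t)`. So if `S[g₀,g₁]` lies in the span of the `φ`'s, then `g₁` is
invariant under `h ↦ h + 1`, and since its support is bounded above, `g₁ = 0`. The functional
`x ↦ x(h+1, 2t) − x(h, 2t+1)` plays the same role for the `ψ`'s and `g₀`. -/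

@[simp]
lemma halfIdx_dbl0 {m : ℕ} (q : Fin (2 ^ m)) : halfIdx (dbl0 q) = q := by
  simp only [halfIdx, dbl0, Fin.ext_iff]; omega

@[simp]
lemma halfIdx_dbl1 {m : ℕ} (q : Fin (2 ^ m)) : halfIdx (dbl1 q) = q := by
  simp only [halfIdx, dbl1, Fin.ext_iff]; omega

@[simp]
lemma dbl0_val_mod_two {m : ℕ} (q : Fin (2 ^ m)) : (dbl0 q).val % 2 = 0 := by
  simp only [dbl0]; omega

@[simp]
lemma dbl1_val_mod_two {m : ℕ} (q : Fin (2 ^ m)) : (dbl1 q).val % 2 = 1 := by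
  simp only [dbl1]; omega

lemma phiImg_apply {m : ℕ} (p : ℤ) (q : Fin (2 ^ m)) (x : ℤ × Fin (2 ^ (m + 1))) :
    phiImg p q x = if (p, q) = (x.1, halfIdx x.2) then 1 else 0 := by
  obtain ⟨h, s⟩ := x
  simp only [phiImg, deltaImg, halfIdx, dbl0, dbl1, Prod.mk.injEq, Fin.ext_iff]
  split_ifs <;> (try norm_num) <;> omega

lemma psiImg_apply {m : ℕ} (p : ℤ) (q : Fin (2 ^ m)) (x : ℤ × Fin (2 ^ (m + 1))) :
    psiImg p q x = if (p, q) = (x.1 + (x.2.val % 2 : ℕ), halfIdx x.2) then 1 else 0 := by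
  obtain ⟨h, s⟩ := x
  simp only [psiImg, deltaImg, halfIdx, dbl0, dbl1, Prod.mk.injEq, Fin.ext_iff]
  split_ifs <;> (try norm_num) <;> omega

@[simp]
lemma Smerge_apply_dbl0 (m : ℕ) (g₀ g₁ : ℤ × Fin (2 ^ m) → ℝ) (h : ℤ) (t : Fin (2 ^ m)) :
    Smerge m g₀ g₁ (h, dbl0 t) = g₀ (h, t) + g₁ (h + (t : ℕ), t) := by
  simp [Smerge]

@[simp]
lemma Smerge_apply_dbl1 (m : ℕ) (g₀ g₁ : ℤ × Fin (2 ^ m) → ℝ) (h : ℤ) (t : Fin (2 ^ m)) :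
    Smerge m g₀ g₁ (h, dbl1 t) = g₀ (h, t) + g₁ (h + (t : ℕ) + 1, t) := by
  simp [Smerge]

lemma Smerge_apply_eq_finsum (m : ℕ) (g₀ g₁ : ℤ × Fin (2 ^ m) → ℝ)
    (x : ℤ × Fin (2 ^ (m + 1))) :
    Smerge m g₀ g₁ x
      = ∑ᶠ pq : ℤ × Fin (2 ^ m),
          (g₀ (pq.1, pq.2) * phiImg pq.1 pq.2 x
            + g₁ (pq.1 + ((pq.2 : ℕ) : ℤ), pq.2) * psiImg pq.1 pq.2 x) := by
  classical
  set A : ℤ × Fin (2 ^ m) := (x.1, halfIdx x.2)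
  set B : ℤ × Fin (2 ^ m) := (x.1 + (x.2.val % 2 : ℕ), halfIdx x.2)
  rw [finsum_eq_finsetSum_of_support_subset (s := {A, B})]
  · simp only [phiImg_apply, psiImg_apply, Prod.mk.eta, mul_ite, mul_one, mul_zero,
      Finset.sum_add_distrib, Finset.sum_ite_eq']
    rw [if_pos (Finset.mem_insert_self A _),
      if_pos (Finset.mem_insert_of_mem (Finset.mem_singleton_self B))]
    simp only [Smerge, add_right_comm]
  · intro pq hpq
    simp only [Function.mem_support, phiImg_apply, psiImg_apply] at hpq
    simp only [Finset.coe_insert, Finset.coe_singleton, Set.mem_insert_iff,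
      Set.mem_singleton_iff, A, B]
    split_ifs at hpq with hA hB <;> simp_all

lemma Smerge_mem_span_phi_psi (n m : ℕ) (g₀ g₁ : ℤ × Fin (2 ^ m) → ℝ)
    (h₀ : ∀ (p : ℤ) (q : Fin (2 ^ m)), g₀ (p, q) ≠ 0 →
      -((q : ℕ) : ℤ) ≤ p ∧ p ≤ (2 ^ n : ℤ) - 1)
    (h₁ : ∀ (p : ℤ) (q : Fin (2 ^ m)), g₁ (p, q) ≠ 0 →
      -((q : ℕ) : ℤ) ≤ p ∧ p ≤ (2 ^ n : ℤ) - 1) :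
    Smerge m g₀ g₁ ∈ Submodule.span ℝ
        ({f : ℤ × Fin (2 ^ (m + 1)) → ℝ |
            ∃ (p : ℤ) (q : Fin (2 ^ m)),
              -((q : ℕ) : ℤ) ≤ p ∧ p ≤ (2 ^ n : ℤ) - 1 ∧ f = phiImg p q} ∪
          {f : ℤ × Fin (2 ^ (m + 1)) → ℝ |
            ∃ (p : ℤ) (q : Fin (2 ^ m)),
              -(2 * (q : ℕ) : ℤ) ≤ p ∧ p ≤ (2 ^ n : ℤ) - 1 - (q : ℕ) ∧
                f = psiImg p q}) := by
  classical
  set c₀ : ℤ × Fin (2 ^ m) → ℝ := fun pq => g₀ (pq.1, pq.2)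
  set c₁ : ℤ × Fin (2 ^ m) → ℝ := fun pq => g₁ (pq.1 + ((pq.2 : ℕ) : ℤ), pq.2)
  have hc₀ (pq : ℤ × Fin (2 ^ m)) (hpq : c₀ pq ≠ 0) :
      -((pq.2 : ℕ) : ℤ) ≤ pq.1 ∧ pq.1 ≤ (2 ^ n : ℤ) - 1 := h₀ _ _ hpq
  have hc₁ (pq : ℤ × Fin (2 ^ m)) (hpq : c₁ pq ≠ 0) :
      -(2 * (pq.2 : ℕ) : ℤ) ≤ pq.1 ∧ pq.1 ≤ (2 ^ n : ℤ) - 1 - (pq.2 : ℕ) := by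
    have := h₁ _ _ hpq; omega
  let T : Finset (ℤ × Fin (2 ^ m)) := Finset.Icc (-(2 ^ (m + 1) : ℤ)) (2 ^ n) ×ˢ Finset.univ
  have hT (pq : ℤ × Fin (2 ^ m)) (hpq : c₀ pq ≠ 0 ∨ c₁ pq ≠ 0) : pq ∈ T := by
    have hq : ((pq.2 : ℕ) : ℤ) < 2 ^ m := by exact_mod_cast pq.2.isLt
    have hpow : (2 : ℤ) ^ (m + 1) = 2 * 2 ^ m := pow_succ' 2 m
    simp only [T, Finset.mem_product, Finset.mem_Icc, Finset.mem_univ, and_true]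
    rcases hpq with hpq | hpq
    · have := hc₀ pq hpq; omega
    · have := hc₁ pq hpq; omega
  have hsum : Smerge m g₀ g₁
      = ∑ pq ∈ T, (c₀ pq • phiImg pq.1 pq.2 + c₁ pq • psiImg pq.1 pq.2) := by
    funext x
    rw [Smerge_apply_eq_finsum, finsum_eq_finsetSum_of_support_subset (s := T)]
    · simp [c₀, c₁]
    · intro pq hpq
      refine hT pq (not_and_or.mp fun h => hpq ?_)
      simp [c₀, c₁, h.1, h.2]
  rw [hsum]
  refine Submodule.sum_mem _ fun pq _ => Submodule.add_mem _ ?_ ?_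
  · by_cases hpq : c₀ pq = 0
    · simp [hpq]
    · exact Submodule.smul_mem _ _ <| Submodule.subset_span <|
        Or.inl ⟨pq.1, pq.2, (hc₀ pq hpq).1, (hc₀ pq hpq).2, rfl⟩
  · by_cases hpq : c₁ pq = 0
    · simp [hpq]
    · exact Submodule.smul_mem _ _ <| Submodule.subset_span <|
        Or.inr ⟨pq.1, pq.2, (hc₁ pq hpq).1, (hc₁ pq hpq).2, rfl⟩

lemma apply_dbl0_eq_apply_dbl1_of_mem_span_phi {m : ℕ} {f : ℤ × Fin (2 ^ (m + 1)) → ℝ}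
    (hf : f ∈ Submodule.span ℝ (Set.range (Function.uncurry (phiImg (m := m)))))
    (h : ℤ) (t : Fin (2 ^ m)) :
    f (h, dbl0 t) = f (h, dbl1 t) := by
  induction hf using Submodule.span_induction with
  | mem _ hf => obtain ⟨pq, rfl⟩ := hf; simp [Function.uncurry_def, phiImg_apply]
  | zero => rfl
  | add _ _ _ _ h₁ h₂ => simp [h₁, h₂]
  | smul _ _ _ h => simp [h]

lemma apply_add_one_dbl0_eq_apply_dbl1_of_mem_span_psi {m : ℕ} {f : ℤ × Fin (2 ^ (m + 1)) → ℝ}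
    (hf : f ∈ Submodule.span ℝ (Set.range (Function.uncurry (psiImg (m := m)))))
    (h : ℤ) (t : Fin (2 ^ m)) :
    f (h + 1, dbl0 t) = f (h, dbl1 t) := by
  induction hf using Submodule.span_induction with
  | mem _ hf => obtain ⟨pq, rfl⟩ := hf; simp [Function.uncurry_def, psiImg_apply]
  | zero => rfl
  | add _ _ _ _ h₁ h₂ => simp [h₁, h₂]
  | smul _ _ _ h => simp [h]

lemma eq_zero_of_invariant_add_one_fst {α M : Type*} [Zero M] {g : ℤ × α → M}
    (hg : ∀ z t, g (z + 1, t) = g (z, t)) (N : ℤ) (hN : ∀ z t, g (z, t) ≠ 0 → z ≤ N) :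
    g = 0 := by
  funext ⟨z, t⟩
  have hper : Function.Periodic (fun z => g (z, t)) 1 := fun z => hg z t
  have hconst (z : ℤ) : g (z, t) = g (0, t) := by simpa using hper.int_mul_eq z
  by_contra hz
  have := hN (N + 1) t (by rwa [hconst, ← hconst z])
  omega

lemma eq_zero_of_Smerge_mem_span_phi {m : ℕ} {g₀ g₁ : ℤ × Fin (2 ^ m) → ℝ}
    (hg : Smerge m g₀ g₁ ∈
      Submodule.span ℝ (Set.range (Function.uncurry (phiImg (m := m)))))
    (N : ℤ) (hN : ∀ z t, g₁ (z, t) ≠ 0 → z ≤ N) :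
    g₁ = 0 := by
  refine eq_zero_of_invariant_add_one_fst (fun z t => ?_) N hN
  have := apply_dbl0_eq_apply_dbl1_of_mem_span_phi hg (z - (t : ℕ)) t
  simp only [Smerge_apply_dbl0, Smerge_apply_dbl1, sub_add_cancel, add_right_inj] at this
  exact this.symm

lemma eq_zero_of_Smerge_mem_span_psi {m : ℕ} {g₀ g₁ : ℤ × Fin (2 ^ m) → ℝ}
    (hg : Smerge m g₀ g₁ ∈
      Submodule.span ℝ (Set.range (Function.uncurry (psiImg (m := m)))))
    (N : ℤ) (hN : ∀ z t, g₀ (z, t) ≠ 0 → z ≤ N) :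
    g₀ = 0 := by
  refine eq_zero_of_invariant_add_one_fst (fun z t => ?_) N hN
  have := apply_add_one_dbl0_eq_apply_dbl1_of_mem_span_psi hg z t
  simp only [Smerge_apply_dbl0, Smerge_apply_dbl1, add_right_comm z 1, add_left_inj] at this
  exact this

/-- Localization: if `g = S[g₀,g₁]` with `g₀, g₁` supported in the trapezoid
`{(h,s) : −s ≤ h ≤ 2^n−1}`, then `g = Σ g₀(p,q)·φ_{p,q} + Σ g₁(p+q,q)·ψ_{p,q}`
lies in the span of `{φ_{p,q} : −q ≤ p ≤ 2^n−1} ∪ {ψ_{p,q} : −2q ≤ p ≤ 2^n−q−1}`;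
moreover if `g` lies in the span of the `φ`'s alone then `g₁ = 0`, and if `g`
lies in the span of the `ψ`'s alone then `g₀ = 0`. -/
theorem Smerge_localization (n m : ℕ) (g₀ g₁ : ℤ × Fin (2 ^ m) → ℝ)
    (h₀ : ∀ (p : ℤ) (q : Fin (2 ^ m)), g₀ (p, q) ≠ 0 →
      -((q : ℕ) : ℤ) ≤ p ∧ p ≤ (2 ^ n : ℤ) - 1)
    (h₁ : ∀ (p : ℤ) (q : Fin (2 ^ m)), g₁ (p, q) ≠ 0 →
      -((q : ℕ) : ℤ) ≤ p ∧ p ≤ (2 ^ n : ℤ) - 1) :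
    (∀ x : ℤ × Fin (2 ^ (m + 1)),
        Smerge m g₀ g₁ x
          = ∑ᶠ pq : ℤ × Fin (2 ^ m),
              (g₀ (pq.1, pq.2) * phiImg pq.1 pq.2 x
                + g₁ (pq.1 + ((pq.2 : ℕ) : ℤ), pq.2) * psiImg pq.1 pq.2 x)) ∧
    Smerge m g₀ g₁ ∈ Submodule.span ℝ
        ({f : ℤ × Fin (2 ^ (m + 1)) → ℝ |
            ∃ (p : ℤ) (q : Fin (2 ^ m)),
              -((q : ℕ) : ℤ) ≤ p ∧ p ≤ (2 ^ n : ℤ) - 1 ∧ f = phiImg p q} ∪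
          {f : ℤ × Fin (2 ^ (m + 1)) → ℝ |
            ∃ (p : ℤ) (q : Fin (2 ^ m)),
              -(2 * (q : ℕ) : ℤ) ≤ p ∧ p ≤ (2 ^ n : ℤ) - 1 - (q : ℕ) ∧
                f = psiImg p q}) ∧
    (Smerge m g₀ g₁ ∈ Submodule.span ℝ
        {f : ℤ × Fin (2 ^ (m + 1)) → ℝ |
          ∃ (p : ℤ) (q : Fin (2 ^ m)),
            -((q : ℕ) : ℤ) ≤ p ∧ p ≤ (2 ^ n : ℤ) - 1 ∧ f = phiImg p q} →
      g₁ = 0) ∧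
    (Smerge m g₀ g₁ ∈ Submodule.span ℝ
        {f : ℤ × Fin (2 ^ (m + 1)) → ℝ |
          ∃ (p : ℤ) (q : Fin (2 ^ m)),
            -(2 * (q : ℕ) : ℤ) ≤ p ∧ p ≤ (2 ^ n : ℤ) - 1 - (q : ℕ) ∧
              f = psiImg p q} →
      g₀ = 0) := by
  refine ⟨Smerge_apply_eq_finsum m g₀ g₁, Smerge_mem_span_phi_psi n m g₀ g₁ h₀ h₁,
    fun hg => ?_, fun hg => ?_⟩
  · refine eq_zero_of_Smerge_mem_span_phi (Submodule.span_mono ?_ hg) _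
      fun z t hz => (h₁ z t hz).2
    rintro f ⟨p, q, -, -, rfl⟩
    exact ⟨(p, q), rfl⟩
  · refine eq_zero_of_Smerge_mem_span_psi (Submodule.span_mono ?_ hg) _
      fun z t hz => (h₀ z t hz).2
    rintro f ⟨p, q, -, -, rfl⟩
    exact ⟨(p, q), rfl⟩
end

section
/- The single-quadrant ADRT R^n : F⁺ → F⁺ is a bijection on the space F⁺ of half-strip images ℤ × Fin 2^n → ℝ whose support is bounded below in the first coordinate. -/
/-- Digital lines, defined recursively on the depth `m`.  `Dline m ℓ h s` is the
digital line of height `h` and local slope `s` in the `ℓ`-th width-`2^m` section: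
`D_0⟦h,ℓ⟧ = {(h,ℓ)}`, `D_{m,ℓ}⟦h,2t⟧ = D_{m-1,2ℓ}⟦h,t⟧ ∪ D_{m-1,2ℓ+1}⟦h+t,t⟧`,
`D_{m,ℓ}⟦h,2t+1⟧ = D_{m-1,2ℓ}⟦h,t⟧ ∪ D_{m-1,2ℓ+1}⟦h+t+1,t⟧`. -/
def Dline : (m : ℕ) → ℕ → ℤ → Fin (2 ^ m) → Finset (ℤ × ℕ)
  | 0, ℓ, h, _ => {(h, ℓ)}
  | m + 1, ℓ, h, s =>
      Dline m (2 * ℓ) h (halfIdx s) ∪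
        Dline m (2 * ℓ + 1) (h + ((halfIdx s).val : ℤ) + ((s.val % 2 : ℕ) : ℤ)) (halfIdx s)

/-- The digital line `D^n_m⟦h,s⟧` with globally indexed slope `s ∈ Fin 2^n`:
the section is `ℓ = ⌊s/2^m⌋` and the local slope is `s mod 2^m`. -/
def DlineG (n m : ℕ) (h : ℤ) (s : Fin (2 ^ n)) : Finset (ℤ × ℕ) :=
  Dline m (s.val / 2 ^ m) h ⟨s.val % 2 ^ m, Nat.mod_lt _ (Nat.two_pow_pos m)⟩

/-- Extension of an image on `ℤ × Fin 2^n` by zero to `ℤ × ℕ`. -/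
def fext {n : ℕ} (f : ℤ × Fin (2 ^ n) → ℝ) : ℤ × ℕ → ℝ :=
  fun p => if h : p.2 < 2 ^ n then f (p.1, ⟨p.2, h⟩) else 0

/-- The level-`m` single-quadrant ADRT: sum of image values over digital lines. -/
def Radon (n m : ℕ) (f : ℤ × Fin (2 ^ n) → ℝ) : ℤ × Fin (2 ^ n) → ℝ :=
  fun p => ∑ q ∈ DlineG n m p.1 p.2, fext f q

/-- The dual digital line `D'^n_m⟦i,j⟧`: the set of `(h,s)` whose digital line
passes through `(i,j)`. -/
def Ddual (n m : ℕ) (i : ℤ) (j : Fin (2 ^ n)) : Set (ℤ × Fin (2 ^ n)) :=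
  {hs | (i, (j : ℕ)) ∈ DlineG n m hs.1 hs.2}

/-- The level-`m` back-projection: sum over the dual digital line. -/
noncomputable def RadonBack (n m : ℕ) (g : ℤ × Fin (2 ^ n) → ℝ) : ℤ × Fin (2 ^ n) → ℝ :=
  fun p => ∑ᶠ q ∈ Ddual n m p.1 p.2, g q

/-!
Splitting an image of width `2^(m+1)` into its two column halves, applying `R^m` to each
and merging the results with `S` gives `R^(m+1)`, so by induction it suffices that `S` is a
bijection `F⁺ × F⁺ → F⁺`. For injectivity, `S[g₀, g₁] = 0` forces every row of `g₁` to be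
`1`-periodic in the height, hence zero when it vanishes far below, and then `g₀ = 0`.
For surjectivity, the preimage is given by the telescoping sums of the paper, which are
finite because the image vanishes far below.
-/

open Set Finset

lemma Function.Periodic.eq_zero_of_forall_le_eq_zero {M : Type*} [Zero M] {u : ℤ → M}
    (hu : Function.Periodic u 1) {b : ℤ} (hb : ∀ i ≤ b, u i = 0) : u = 0 := by
  funext i
  have : u i = u b := by simpa using hu.int_mul (i - b) b
  rw [this, hb b le_rfl, Pi.zero_apply]

lemma sum_Ico_add_one_eq_of_forall_lt_eq_zero {M : Type*} [AddCommMonoid M] {u : ℤ → M}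
    {b : ℤ} (hb : ∀ k < b, u k = 0) (i : ℤ) :
    ∑ k ∈ Ico b (i + 1), u k = ∑ k ∈ Ico b i, u k + u i := by
  rcases le_or_gt b i with hbi | hib
  · exact (sum_Ico_add_eq_sum_Ico_add_one hbi u).symm
  · rw [Finset.Ico_eq_empty (by omega), Finset.Ico_eq_empty (by omega), hb i hib]
    simp

lemma BddBelowSupp.sub {k : ℕ} {f g : ℤ × Fin k → ℝ} (hf : BddBelowSupp f)
    (hg : BddBelowSupp g) : BddBelowSupp (f - g) := by
  obtain ⟨b, hb⟩ := hf
  obtain ⟨c, hc⟩ := hg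
  exact ⟨min b c, fun i hi j => by
    simp [hb i (hi.trans (min_le_left _ _)), hc i (hi.trans (min_le_right _ _))]⟩

section Halves

variable {m : ℕ}

def evenIdx (t : Fin (2 ^ m)) : Fin (2 ^ (m + 1)) :=
  ⟨2 * t.val, by rw [pow_succ]; omega⟩

def oddIdx (t : Fin (2 ^ m)) : Fin (2 ^ (m + 1)) :=
  ⟨2 * t.val + 1, by rw [pow_succ]; omega⟩

@[simp] lemma halfIdx_evenIdx (t : Fin (2 ^ m)) : halfIdx (evenIdx t) = t := by
  ext; simp [halfIdx, evenIdx]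

@[simp] lemma halfIdx_oddIdx (t : Fin (2 ^ m)) : halfIdx (oddIdx t) = t := by
  ext; simp [halfIdx, oddIdx]; omega

lemma exists_eq_evenIdx_or_eq_oddIdx (s : Fin (2 ^ (m + 1))) :
    ∃ t, s = evenIdx t ∨ s = oddIdx t := by
  refine ⟨halfIdx s, ?_⟩
  rcases Nat.mod_two_eq_zero_or_one s.val with h | h
  · exact .inl (by ext; simp [evenIdx, halfIdx]; omega)
  · exact .inr (by ext; simp [oddIdx, halfIdx]; omega)

lemma add_mul_two_pow_lt (ℓ : Fin 2) (t : Fin (2 ^ m)) :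
    t.val + ℓ.val * 2 ^ m < 2 ^ (m + 1) := by
  have := ℓ.isLt
  have := t.isLt
  rw [pow_succ]
  nlinarith

def colBlock (ℓ : Fin 2) (f : ℤ × Fin (2 ^ (m + 1)) → ℝ) : ℤ × Fin (2 ^ m) → ℝ :=
  fun p => f (p.1, ⟨p.2.val + ℓ.val * 2 ^ m, add_mul_two_pow_lt ℓ p.2⟩)

def splitHalves (f : ℤ × Fin (2 ^ (m + 1)) → ℝ) :
    (ℤ × Fin (2 ^ m) → ℝ) × (ℤ × Fin (2 ^ m) → ℝ) :=
  (colBlock 0 f, colBlock 1 f)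

def joinHalves (g : (ℤ × Fin (2 ^ m) → ℝ) × (ℤ × Fin (2 ^ m) → ℝ)) :
    ℤ × Fin (2 ^ (m + 1)) → ℝ :=
  fun p => if h : p.2.val < 2 ^ m then g.1 (p.1, ⟨p.2.val, h⟩)
    else g.2 (p.1, ⟨p.2.val - 2 ^ m, by have := p.2.isLt; have := pow_succ 2 m; omega⟩)

lemma splitHalves_joinHalves (g : (ℤ × Fin (2 ^ m) → ℝ) × (ℤ × Fin (2 ^ m) → ℝ)) :
    splitHalves (joinHalves g) = g := by
  ext ⟨h, t⟩ <;> simp [splitHalves, joinHalves, colBlock]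

lemma joinHalves_splitHalves (f : ℤ × Fin (2 ^ (m + 1)) → ℝ) :
    joinHalves (splitHalves f) = f := by
  ext ⟨h, s⟩
  by_cases hs : s.val < 2 ^ m
  · simp [splitHalves, joinHalves, colBlock, hs]
  · simp [splitHalves, joinHalves, colBlock, hs, Nat.sub_add_cancel (not_lt.1 hs)]

lemma splitHalves_bijOn :
    BijOn splitHalves {f : ℤ × Fin (2 ^ (m + 1)) → ℝ | BddBelowSupp f}
      ({g : ℤ × Fin (2 ^ m) → ℝ | BddBelowSupp g} ×ˢ {g | BddBelowSupp g}) := by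
  refine InvOn.bijOn ⟨fun f _ => joinHalves_splitHalves f, fun g _ => splitHalves_joinHalves g⟩
    ?_ ?_
  · rintro f ⟨b, hb⟩
    exact ⟨⟨b, fun i hi _ => hb i hi _⟩, ⟨b, fun i hi _ => hb i hi _⟩⟩
  · rintro g ⟨⟨b₀, hb₀⟩, ⟨b₁, hb₁⟩⟩
    refine ⟨min b₀ b₁, fun i hi s => ?_⟩
    simp only [joinHalves]
    split_ifs
    · exact hb₀ i (hi.trans (min_le_left _ _)) _
    · exact hb₁ i (hi.trans (min_le_right _ _)) _

end Halves

section Merge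

variable {m : ℕ}

/-- The merge operator `S[g₀, g₁]` of the paper. -/
def merge (g₀ g₁ : ℤ × Fin (2 ^ m) → ℝ) : ℤ × Fin (2 ^ (m + 1)) → ℝ :=
  fun p => g₀ (p.1, halfIdx p.2) +
    g₁ (p.1 + ((halfIdx p.2).val : ℤ) + ((p.2.val % 2 : ℕ) : ℤ), halfIdx p.2)

@[simp] lemma merge_apply_evenIdx (g₀ g₁ : ℤ × Fin (2 ^ m) → ℝ) (h : ℤ) (t : Fin (2 ^ m)) :
    merge g₀ g₁ (h, evenIdx t) = g₀ (h, t) + g₁ (h + t.val, t) := by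
  simp only [merge, halfIdx_evenIdx]
  simp [evenIdx]

@[simp] lemma merge_apply_oddIdx (g₀ g₁ : ℤ × Fin (2 ^ m) → ℝ) (h : ℤ) (t : Fin (2 ^ m)) :
    merge g₀ g₁ (h, oddIdx t) = g₀ (h, t) + g₁ (h + t.val + 1, t) := by
  simp only [merge, halfIdx_oddIdx]
  simp [oddIdx]

lemma merge_sub (g₀ g₁ g₀' g₁' : ℤ × Fin (2 ^ m) → ℝ) :
    merge (g₀ - g₀') (g₁ - g₁') = merge g₀ g₁ - merge g₀' g₁' := by
  ext p
  simp only [merge, Pi.sub_apply]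
  ring

lemma BddBelowSupp.merge {g₀ g₁ : ℤ × Fin (2 ^ m) → ℝ} (h₀ : BddBelowSupp g₀)
    (h₁ : BddBelowSupp g₁) : BddBelowSupp (merge g₀ g₁) := by
  obtain ⟨b₀, hb₀⟩ := h₀
  obtain ⟨b₁, hb₁⟩ := h₁
  refine ⟨min b₀ (b₁ - 2 ^ m), fun i hi s => ?_⟩
  have : ((halfIdx s).val : ℤ) < 2 ^ m := by exact_mod_cast (halfIdx s).isLt
  have : s.val % 2 < 2 := Nat.mod_lt _ two_pos
  simp only [_root_.merge]
  rw [hb₀ _ (by omega), hb₁ _ (by omega), add_zero]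

/-- Comparing slopes `2t` and `2t+1` shows that each row `g₁ (·, t)` is `1`-periodic;
vanishing far below, it vanishes. -/
lemma eq_zero_of_merge_eq_zero {g₀ g₁ : ℤ × Fin (2 ^ m) → ℝ} (h₁ : BddBelowSupp g₁)
    (h : merge g₀ g₁ = 0) : g₀ = 0 ∧ g₁ = 0 := by
  have hEven (i : ℤ) (t : Fin (2 ^ m)) : g₀ (i, t) + g₁ (i + t.val, t) = 0 := by
    simpa using congrFun h (i, evenIdx t)
  have hOdd (i : ℤ) (t : Fin (2 ^ m)) : g₀ (i, t) + g₁ (i + t.val + 1, t) = 0 := by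
    simpa using congrFun h (i, oddIdx t)
  have hg₁ : g₁ = 0 := by
    obtain ⟨b, hb⟩ := h₁
    ext ⟨i, t⟩
    have hper : Function.Periodic (fun i => g₁ (i, t)) 1 := fun i => by
      have e := hEven (i - t.val) t
      have o := hOdd (i - t.val) t
      rw [sub_add_cancel] at e o
      exact (by linarith : g₁ (i + 1, t) = g₁ (i, t))
    exact congrFun (hper.eq_zero_of_forall_le_eq_zero fun i hi => hb i hi t) i
  refine ⟨?_, hg₁⟩
  ext ⟨i, t⟩
  simpa [hg₁] using hEven i t

lemma merge_injOn :
    InjOn (Function.uncurry merge) (univ ×ˢ {g : ℤ × Fin (2 ^ m) → ℝ | BddBelowSupp g}) := by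
  rintro ⟨g₀, g₁⟩ ⟨-, h₁⟩ ⟨g₀', g₁'⟩ ⟨-, h₁'⟩ he
  obtain ⟨e₀, e₁⟩ := eq_zero_of_merge_eq_zero (h₁.sub h₁')
    (by rw [merge_sub]; exact sub_eq_zero.2 he)
  exact Prod.ext (sub_eq_zero.1 e₀) (sub_eq_zero.1 e₁)

/-- Inverse of `merge` on images vanishing at heights `≤ b`: the right argument is the
discrete antiderivative of the difference between slopes `2t+1` and `2t`. -/
noncomputable def mergeInvRight (b : ℤ) (g : ℤ × Fin (2 ^ (m + 1)) → ℝ) :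
    ℤ × Fin (2 ^ m) → ℝ :=
  fun p => ∑ k ∈ Ico b (p.1 - p.2.val), (g (k, oddIdx p.2) - g (k, evenIdx p.2))

noncomputable def mergeInvLeft (b : ℤ) (g : ℤ × Fin (2 ^ (m + 1)) → ℝ) :
    ℤ × Fin (2 ^ m) → ℝ :=
  fun p => g (p.1, evenIdx p.2) - mergeInvRight b g (p.1 + p.2.val, p.2)

lemma mergeInvRight_eq_zero {b i : ℤ} (g : ℤ × Fin (2 ^ (m + 1)) → ℝ) (t : Fin (2 ^ m))
    (hi : i - t.val ≤ b) : mergeInvRight b g (i, t) = 0 := by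
  simp only [mergeInvRight]
  rw [Finset.Ico_eq_empty (by omega), sum_empty]

lemma merge_mergeInv {b : ℤ} {g : ℤ × Fin (2 ^ (m + 1)) → ℝ}
    (hb : ∀ i ≤ b, ∀ j, g (i, j) = 0) :
    merge (mergeInvLeft b g) (mergeInvRight b g) = g := by
  ext ⟨h, s⟩
  obtain ⟨t, rfl | rfl⟩ := exists_eq_evenIdx_or_eq_oddIdx s
  · simp [mergeInvLeft]
  · have hstep : mergeInvRight b g (h + t.val + 1, t) =
        mergeInvRight b g (h + t.val, t) + (g (h, oddIdx t) - g (h, evenIdx t)) := by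
      simpa [mergeInvRight, add_sub_right_comm] using sum_Ico_add_one_eq_of_forall_lt_eq_zero
        (u := fun k => g (k, oddIdx t) - g (k, evenIdx t))
        (fun k hk => by simp [hb k hk.le]) h
    rw [merge_apply_oddIdx, hstep, mergeInvLeft]
    ring

lemma merge_surjOn :
    SurjOn (Function.uncurry merge)
      ({g : ℤ × Fin (2 ^ m) → ℝ | BddBelowSupp g} ×ˢ {g | BddBelowSupp g})
      {g | BddBelowSupp g} := by
  rintro g ⟨b, hb⟩
  refine ⟨(mergeInvLeft b g, mergeInvRight b g), ⟨⟨b, fun i hi t => ?_⟩, ⟨b, fun i hi t => ?_⟩⟩,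
    merge_mergeInv hb⟩
  · simp only [mergeInvLeft]
    rw [hb i hi, mergeInvRight_eq_zero _ _ (by omega), sub_zero]
  · exact mergeInvRight_eq_zero _ _ (by omega)

lemma merge_bijOn :
    BijOn (Function.uncurry merge)
      ({g : ℤ × Fin (2 ^ m) → ℝ | BddBelowSupp g} ×ˢ {g | BddBelowSupp g})
      {g | BddBelowSupp g} :=
  ⟨fun _ hg => hg.1.merge hg.2, merge_injOn.mono (prod_mono (subset_univ _) subset_rfl),
    merge_surjOn⟩

end Merge

section Radon

lemma Dline_eq_image (m ℓ : ℕ) (h : ℤ) (s : Fin (2 ^ m)) :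
    Dline m ℓ h s = (Dline m 0 h s).image (fun q => (q.1, q.2 + ℓ * 2 ^ m)) := by
  induction m generalizing ℓ h with
  | zero => simp [Dline]
  | succ m ih =>
    rw [Dline, Dline, ih (2 * ℓ), ih (2 * ℓ + 1), ih 0, ih 1]
    simp only [Finset.image_union, Finset.image_image]
    congr 1 <;>
    · refine image_congr fun q _ => ?_
      simp only [Function.comp_apply, Prod.mk.injEq, pow_succ]
      exact ⟨trivial, by ring⟩

lemma snd_mem_Ico_of_mem_Dline {m ℓ : ℕ} {h : ℤ} {s : Fin (2 ^ m)} {q : ℤ × ℕ}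
    (hq : q ∈ Dline m ℓ h s) : q.2 ∈ Set.Ico (ℓ * 2 ^ m) ((ℓ + 1) * 2 ^ m) := by
  induction m generalizing ℓ h with
  | zero =>
    obtain rfl : q = (h, ℓ) := by simpa [Dline] using hq
    simp
  | succ m ih =>
    rw [Dline, Finset.mem_union] at hq
    rw [pow_succ]
    rcases hq with hq | hq <;> obtain ⟨h₁, h₂⟩ := ih hq <;> constructor <;> nlinarith

lemma DlineG_self (n : ℕ) (h : ℤ) (s : Fin (2 ^ n)) : DlineG n n h s = Dline n 0 h s := by
  simp only [DlineG, Nat.div_eq_of_lt s.isLt, Nat.mod_eq_of_lt s.isLt]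

lemma sum_Dline_fext {m : ℕ} (ℓ : Fin 2) (f : ℤ × Fin (2 ^ (m + 1)) → ℝ) (h : ℤ)
    (t : Fin (2 ^ m)) : ∑ q ∈ Dline m ℓ h t, fext f q = Radon m m (colBlock ℓ f) (h, t) := by
  rw [Dline_eq_image, sum_image fun x _ y _ hxy => Prod.ext_iff.2 (by simpa using hxy), Radon,
    DlineG_self]
  refine sum_congr rfl fun q hq => ?_
  have hq₁ : q.2 < 2 ^ m := by simpa using (snd_mem_Ico_of_mem_Dline hq).2
  have hq₂ := add_mul_two_pow_lt ℓ ⟨q.2, hq₁⟩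
  simp only [fext, colBlock, dif_pos hq₁, dif_pos hq₂]

lemma Radon_succ (m : ℕ) (f : ℤ × Fin (2 ^ (m + 1)) → ℝ) :
    Radon (m + 1) (m + 1) f = merge (Radon m m (colBlock 0 f)) (Radon m m (colBlock 1 f)) := by
  ext ⟨h, s⟩
  have hdisj : Disjoint (Dline m 0 h (halfIdx s))
      (Dline m 1 (h + (halfIdx s).val + (s.val % 2 : ℕ)) (halfIdx s)) := by
    refine disjoint_left.2 fun q hq₀ hq₁ => ?_
    have hlt := (snd_mem_Ico_of_mem_Dline hq₀).2
    have hge := (snd_mem_Ico_of_mem_Dline hq₁).1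
    omega
  rw [Radon, DlineG_self, Dline, mul_zero, zero_add, sum_union hdisj]
  exact congrArg₂ (· + ·) (sum_Dline_fext 0 f _ _) (sum_Dline_fext 1 f _ _)

lemma Radon_zero : Radon 0 0 = id := by
  ext f ⟨h, s⟩
  have hs : s = 0 := Fin.ext (by simp)
  simp [Radon, DlineG_self, Dline, fext, hs]

end Radon

/-- The single-quadrant ADRT `R^n` is a bijection from the space of half-strip
images onto itself. -/
theorem Radon_bijOn (n : ℕ) :
    Set.BijOn (Radon n n)
      {f : ℤ × Fin (2 ^ n) → ℝ | BddBelowSupp f}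
      {f : ℤ × Fin (2 ^ n) → ℝ | BddBelowSupp f} := by
  induction n with
  | zero => exact Radon_zero ▸ bijOn_id _
  | succ m ih =>
    have hfactor : Radon (m + 1) (m + 1) =
        Function.uncurry merge ∘ (fun g => (Radon m m g.1, Radon m m g.2)) ∘ splitHalves := by
      ext f : 1
      exact Radon_succ m f
    rw [hfactor]
    exact merge_bijOn.comp ((ih.prodMap ih).comp splitHalves_bijOn)
end
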